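/- Let h > 0 and c_h := √(tanh h). For each integer p ≥ 2 let ψ_p > 0 be the unique positive solution of √( (ψ+p)·tanh(h·(ψ+p)) ) + √( ψ·tanh(h·ψ) ) = p·c_h, and define ω_*^{(p)}(h) := c_h·ψ_p + √( ψ_p·tanh(h·ψ_p) ). Then 0 < ω_*^{(2)}(h) < ω_*^{(3)}(h) < … < ω_*^{(p)}(h) < … , and lim_{p→+∞} ω_*^{(p)}(h) = +∞. -/

import Mathlib

/-!
Write `g x = √(x tanh (h x))`, so that `c_h = g 1`. The equation defining `ψ_p` turns
`ω_p = c_h ψ_p + g ψ_p` into `c_h x_p - g x_p` with `x_p = ψ_p + p`. As `g` is increasing, that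
equation forces `x_p` to increase strictly with `p`; as `g x / x` decreases strictly (because
`tanh y / y` does), `x ↦ c_h x - g x` increases strictly on `[1, ∞)`. Divergence follows from
`g x ≤ √x ≤ (c_h x + 1 / c_h) / 2`, which gives `ω_p ≥ c_h p / 2 - 1 / (2 c_h)`.
-/
open Real Set Filter

namespace Real

theorem hasDerivAt_tanh (x : ℝ) : HasDerivAt tanh (1 / cosh x ^ 2) x := by
  have h := (hasDerivAt_sinh x).div (hasDerivAt_cosh x) (cosh_pos x).ne'
  have hnum : cosh x * cosh x - sinh x * sinh x = 1 := by
    linear_combination cosh_sq_sub_sinh_sq x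
  have htanh : sinh / cosh = tanh := funext fun y => (tanh_eq_sinh_div_cosh y).symm
  rwa [hnum, htanh] at h

theorem tanh_strictMono : StrictMono tanh :=
  strictMono_of_deriv_pos fun x => by rw [(hasDerivAt_tanh x).deriv]; positivity

theorem tanh_pos {x : ℝ} (hx : 0 < x) : 0 < tanh x := by
  simpa using tanh_strictMono hx

theorem tanh_nonneg {x : ℝ} (hx : 0 ≤ x) : 0 ≤ tanh x := by
  simpa using tanh_strictMono.monotone hx

theorem strictAntiOn_tanh_div : StrictAntiOn (fun x => tanh x / x) (Ioi 0) := by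
  refine strictAntiOn_of_deriv_neg (convex_Ioi 0)
    (fun x hx => ((hasDerivAt_tanh x).continuousAt.div continuousAt_id
      (ne_of_gt hx)).continuousWithinAt) fun x hx => ?_
  rw [interior_Ioi] at hx
  have hx : 0 < x := hx
  have hd : HasDerivAt (fun x => tanh x / x) _ x :=
    (hasDerivAt_tanh x).div (hasDerivAt_id' x) hx.ne'
  rw [hd.deriv, tanh_eq_sinh_div_cosh]
  refine div_neg_of_neg_of_pos ?_ (by positivity)
  -- `x < sinh x cosh x` is `2x < sinh 2x`
  have hsinh : x < sinh x * cosh x := by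
    have := self_lt_sinh_iff.2 (by positivity : 0 < 2 * x)
    rw [sinh_two_mul] at this
    linarith
  have hc := cosh_pos x
  rw [sub_neg, one_div_mul_eq_div, mul_one, div_lt_div_iff₀ (by positivity) hc]
  nlinarith [mul_lt_mul_of_pos_right hsinh hc]

end Real

/-- In the paper's notation `ω^σ(φ, h) = c_h φ - σ · gravityWaveFreq h φ`. -/
noncomputable def gravityWaveFreq (h x : ℝ) : ℝ := √(x * tanh (h * x))

section gravityWaveFreq

variable {h : ℝ}

theorem gravityWaveFreq_one (h : ℝ) : gravityWaveFreq h 1 = √(tanh h) := by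
  simp [gravityWaveFreq]

theorem gravityWaveFreq_le_sqrt {x : ℝ} (hx : 0 ≤ x) : gravityWaveFreq h x ≤ √x :=
  sqrt_le_sqrt (mul_le_of_le_one_right hx (tanh_lt_one _).le)

theorem monotoneOn_gravityWaveFreq (hh : 0 ≤ h) : MonotoneOn (gravityWaveFreq h) (Ici 0) :=
  fun _ ha _ _ hab => sqrt_le_sqrt <| mul_le_mul hab
    (tanh_strictMono.monotone (mul_le_mul_of_nonneg_left hab hh))
    (tanh_nonneg (mul_nonneg hh ha)) (ha.trans hab)

theorem gravityWaveFreq_div_self (hh : 0 < h) {x : ℝ} (hx : 0 < x) :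
    gravityWaveFreq h x / x = √(h * (tanh (h * x) / (h * x))) := by
  rw [gravityWaveFreq, ← sqrt_sq hx.le, ← sqrt_div' _ (sq_nonneg x), sqrt_sq hx.le]
  congr 1
  field_simp

theorem strictAntiOn_gravityWaveFreq_div (hh : 0 < h) :
    StrictAntiOn (fun x => gravityWaveFreq h x / x) (Ioi 0) := by
  intro a ha b hb hab
  simp only [gravityWaveFreq_div_self hh ha, gravityWaveFreq_div_self hh hb]
  have hb' : 0 < h * b := mul_pos hh hb
  refine sqrt_lt_sqrt (by have := tanh_pos hb'; positivity) (mul_lt_mul_of_pos_left ?_ hh)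
  exact strictAntiOn_tanh_div (mul_pos hh ha) hb' (mul_lt_mul_of_pos_left hab hh)

end gravityWaveFreq

section

variable {g : ℝ → ℝ} {c : ℝ}

theorem strictMonoOn_mul_sub_of_strictAntiOn_div
    (hg : StrictAntiOn (fun x => g x / x) (Ioi 0)) (hc : g 1 ≤ c) :
    StrictMonoOn (fun x => c * x - g x) (Ici 1) := by
  -- `g b < (g a / a) b = g a + (g a / a) (b - a) ≤ g a + c (b - a)`
  intro a ha b hb hab
  have ha : 1 ≤ a := ha
  have ha0 : 0 < a := one_pos.trans_le ha
  have hga : g a / a ≤ c :=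
    (hg.antitoneOn (mem_Ioi.2 one_pos) (mem_Ioi.2 ha0) ha).trans (by simpa)
  have hgb : g b / b < g a / a := hg (mem_Ioi.2 ha0) (mem_Ioi.2 (ha0.trans hab)) hab
  rw [div_lt_div_iff₀ (ha0.trans hab) ha0] at hgb
  rw [div_le_iff₀ ha0] at hga
  show c * a - g a < c * b - g b
  nlinarith

theorem MonotoneOn.add_lt_add_of_add_eq_mul (hg : MonotoneOn g (Ici 0)) (hc : 0 < c)
    {p q y z : ℝ} (hp : 0 ≤ p) (hpq : p < q) (hy : 0 ≤ y) (hz : 0 ≤ z)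
    (hyp : g (y + p) + g y = p * c) (hzq : g (z + q) + g z = q * c) : y + p < z + q := by
  by_contra! hle
  have := add_le_add (hg (mem_Ici.2 (by linarith)) (mem_Ici.2 (by linarith)) hle)
    (hg (mem_Ici.2 hz) (mem_Ici.2 hy) (by linarith : z ≤ y))
  rw [hyp, hzq] at this
  nlinarith

end

theorem sqrt_le_half_mul_add_inv {c x : ℝ} (hc : 0 < c) (hx : 0 ≤ x) :
    √x ≤ (c * x + c⁻¹) / 2 := by
  rw [le_div_iff₀ two_pos, ← mul_le_mul_iff_of_pos_left hc, mul_add, mul_inv_cancel₀ hc.ne']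
  linear_combination sq_nonneg (c * √x - 1) + c ^ 2 * sq_sqrt hx

/-- Let `ψ_p > 0` be the unique positive solution of
`√((ψ+p)tanh(h(ψ+p))) + √(ψ tanh(hψ)) = p √tanh h` and set
`ω_*^{(p)}(h) = √(tanh h) ψ_p + √(ψ_p tanh(h ψ_p))`. Then the double eigenvalues
`ω_*^{(p)}(h)` form a strictly increasing positive sequence diverging to `+∞`. -/
theorem stmt12 (h : ℝ) (hh : 0 < h) (ψ : ℕ → ℝ)
    (hψ : ∀ p : ℕ, 2 ≤ p → 0 < ψ p ∧
      Real.sqrt ((ψ p + p) * Real.tanh (h * (ψ p + p)))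
          + Real.sqrt (ψ p * Real.tanh (h * ψ p))
        = p * Real.sqrt (Real.tanh h)) :
    0 < Real.sqrt (Real.tanh h) * ψ 2 + Real.sqrt (ψ 2 * Real.tanh (h * ψ 2)) ∧
    (∀ p q : ℕ, 2 ≤ p → p < q →
      Real.sqrt (Real.tanh h) * ψ p + Real.sqrt (ψ p * Real.tanh (h * ψ p))
        < Real.sqrt (Real.tanh h) * ψ q + Real.sqrt (ψ q * Real.tanh (h * ψ q))) ∧
    Filter.Tendsto
      (fun p : ℕ => Real.sqrt (Real.tanh h) * ψ p + Real.sqrt (ψ p * Real.tanh (h * ψ p)))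
      Filter.atTop Filter.atTop := by
  simp only [← gravityWaveFreq.eq_1] at hψ ⊢
  set c := √(tanh h)
  have hc : 0 < c := sqrt_pos.2 (tanh_pos hh)
  have hω (p : ℕ) (hp : 2 ≤ p) :
      c * ψ p + gravityWaveFreq h (ψ p) = c * (ψ p + p) - gravityWaveFreq h (ψ p + p) := by
    linarith [(hψ p hp).2]
  have hle (p : ℕ) (hp : 2 ≤ p) : (p : ℝ) ≤ ψ p + p := by linarith [(hψ p hp).1]
  refine ⟨add_pos_of_pos_of_nonneg (mul_pos hc (hψ 2 le_rfl).1) (sqrt_nonneg _),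
    fun p q hp hpq => ?_, ?_⟩
  · have hq := hp.trans hpq.le
    rw [hω p hp, hω q hq]
    refine strictMonoOn_mul_sub_of_strictAntiOn_div (strictAntiOn_gravityWaveFreq_div hh)
      (gravityWaveFreq_one h).le ?_ ?_ ?_
    · exact (hle p hp).trans' (by exact_mod_cast (by omega : 1 ≤ p))
    · exact (hle q hq).trans' (by exact_mod_cast (by omega : 1 ≤ q))
    · exact (monotoneOn_gravityWaveFreq hh.le).add_lt_add_of_add_eq_mul hc (Nat.cast_nonneg p)
        (Nat.cast_lt.2 hpq) (hψ p hp).1.le (hψ q hq).1.le (hψ p hp).2 (hψ q hq).2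
  · refine tendsto_atTop_mono' atTop ?_ <| tendsto_atTop_add_const_right _ (-(c⁻¹ / 2)) <|
      tendsto_natCast_atTop_atTop.const_mul_atTop (half_pos hc)
    filter_upwards [eventually_ge_atTop 2] with p hp
    have hx := hle p hp
    have hx0 : 0 ≤ ψ p + p := by linarith [(hψ p hp).1]
    rw [hω p hp]
    nlinarith [gravityWaveFreq_le_sqrt (h := h) hx0, sqrt_le_half_mul_add_inv hc hx0]
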